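/- For every field F of characteristic 0 and every prime p, and every nonzero f ∈ F[X] of degree < p, we have wt(f) + dim(I_f) ≥ p + 1, where I_f is the ideal generated by f in F[X]/(X^p - 1). -/

import Mathlib

/-!
Let `g = gcd(f, X^p - 1)`, so that `dim I_f = p - deg g` and `g` has `deg g` distinct roots among
the `p`-th roots of unity `ζ^k`, all of them roots of `f`. It therefore suffices that a nonzero
`f = ∑_{j<t} c_j X^{b_j}` of degree `< p` vanishes at fewer than `t` of the `ζ^k`. Otherwise the
coefficient vector `c` lies in the kernel of a square minor `(ζ^{a_i b_j})` of the Fourier matrix,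
which is impossible by Chebotarev's theorem: writing `det (x_i ^ b_j) = V(x) S(x)` with `V` the
Vandermonde determinant, specialising `x_i = X^i` and comparing the values at `X = 1` after dividing
by the common power of `X - 1` gives `∏ (b_j - b_i) = ∏ (j - i) · S(1)`, so `p ∤ S(1)`; whereas
`S(ζ^{a_i}) = 0` would make `Φ_p` divide `S(X^{a_i})`, and `Φ_p(1) = p` would give `p ∣ S(1)`.
-/

open Polynomial

namespace MvPolynomial

variable {σ R : Type*} [CommRing R]

theorem X_sub_X_dvd_sub_aeval_update [DecidableEq σ] (i j : σ) (P : MvPolynomial σ R) :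
    X j - X i ∣ P - aeval (Function.update X j (X i)) P := by
  rw [← Ideal.mem_span_singleton, ← Ideal.Quotient.eq]
  have hcomp : Ideal.Quotient.mkₐ R (Ideal.span {X j - X i}) =
      (Ideal.Quotient.mkₐ R _).comp (aeval (Function.update X j (X i))) := by
    refine algHom_ext fun k => ?_
    rcases eq_or_ne k j with rfl | hk
    · simp [Ideal.Quotient.eq]
    · simp [Function.update_of_ne hk]
  exact congr($hcomp P)

theorem prime_X_sub_X [IsDomain R] {i j : σ} (h : i ≠ j) :
    Prime (X j - X i : MvPolynomial σ R) := by
  classical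
  let e : Option {k : σ // k ≠ j} ≃ σ := Equiv.optionSubtypeNe j
  let φ : MvPolynomial σ R ≃ₐ[R] Polynomial (MvPolynomial {k : σ // k ≠ j} R) :=
    (renameEquiv R e.symm).trans (optionEquivLeft R _)
  have hj : φ (X j) = Polynomial.X := by
    simp only [φ, AlgEquiv.trans_apply, renameEquiv_apply, rename_X]
    rw [show e.symm j = none from Equiv.optionSubtypeNe_symm_self j]
    exact optionEquivLeft_X_none R _
  have hi : φ (X i) = Polynomial.C (X ⟨i, h⟩) := by
    simp only [φ, AlgEquiv.trans_apply, renameEquiv_apply, rename_X]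
    rw [Equiv.optionSubtypeNe_symm_of_ne h]
    exact optionEquivLeft_X_some R _ _
  rw [← MulEquiv.prime_iff φ.toMulEquiv]
  change Prime (φ (X j - X i))
  rw [map_sub, hj, hi]
  exact Polynomial.prime_X_sub_C _

theorem X_sub_X_not_dvd_X_sub_X [Nontrivial R] {i j k l : σ} (hki : k ≠ i) (hkj : k ≠ j)
    (hkl : k ≠ l) : ¬ (X j - X i : MvPolynomial σ R) ∣ X l - X k := by
  classical
  intro hdvd
  simpa [Pi.single_apply, hki, hkj, hkl.symm] using map_dvd (eval (Pi.single k 1)) hdvd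

theorem eval_one_aeval_X_pow (e : σ → ℕ) (S : MvPolynomial σ R) :
    (aeval (fun i => (Polynomial.X : R[X]) ^ e i) S).eval 1 = eval 1 S := by
  simp [← Polynomial.coe_aeval_eq_eval, comp_aeval_apply]
  rfl

end MvPolynomial

def orderedPairs (n : ℕ) : Finset (Σ _ : Fin n, Fin n) :=
  Finset.univ.sigma fun i => Finset.Ioi i

theorem mem_orderedPairs {n : ℕ} {x : Σ _ : Fin n, Fin n} : x ∈ orderedPairs n ↔ x.1 < x.2 := by
  simp [orderedPairs]

section Vandermonde

open MvPolynomial Matrix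

variable {R : Type*} [CommRing R]

theorem Matrix.det_vandermonde_eq_prod_orderedPairs {n : ℕ} (v : Fin n → R) :
    (vandermonde v).det = ∏ x ∈ orderedPairs n, (v x.2 - v x.1) := by
  rw [det_vandermonde, Finset.prod_sigma']
  rfl

theorem MvPolynomial.pairwise_isRelPrime_X_sub_X [IsDomain R] (n : ℕ) :
    (orderedPairs n : Set (Σ _ : Fin n, Fin n)).Pairwise
      fun x y => IsRelPrime (X x.2 - X x.1 : MvPolynomial (Fin n) R) (X y.2 - X y.1) := by
  rintro ⟨i, j⟩ hij ⟨k, l⟩ hkl hne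
  rw [Finset.mem_coe, mem_orderedPairs] at hij hkl
  refine ((prime_X_sub_X hij.ne).irreducible.isRelPrime_iff_not_dvd).mpr ?_
  by_cases hk : k = i ∨ k = j
  · have hl : l ≠ i ∧ l ≠ j := by
      rcases hk with rfl | rfl <;> refine ⟨?_, ?_⟩ <;> rintro rfl <;>
        first | exact lt_irrefl _ ‹_› | exact hne rfl | exact lt_asymm hij hkl
    rw [← dvd_neg, neg_sub]
    exact X_sub_X_not_dvd_X_sub_X hl.1 hl.2 hkl.ne'
  · push Not at hk
    exact X_sub_X_not_dvd_X_sub_X hk.1 hk.2 hkl.ne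

theorem Matrix.det_vandermonde_X_dvd_det_X_pow [IsDomain R] [UniqueFactorizationMonoid R]
    {n : ℕ} (b : Fin n → ℕ) :
    (vandermonde (X : Fin n → MvPolynomial (Fin n) R)).det ∣ (of fun i j => X i ^ b j).det := by
  rw [det_vandermonde_eq_prod_orderedPairs]
  refine Finset.prod_dvd_of_isRelPrime (pairwise_isRelPrime_X_sub_X n) ?_
  rintro ⟨i, j⟩ hij
  rw [mem_orderedPairs] at hij
  have h := X_sub_X_dvd_sub_aeval_update i j (of fun i j => (X i : MvPolynomial (Fin n) R) ^ b j).det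
  -- the substitution `X j ↦ X i` makes rows `i` and `j` equal
  rwa [AlgHom.map_det, det_zero_of_row_eq (M := (MvPolynomial.aeval _).mapMatrix _) hij.ne,
    sub_zero] at h
  funext k
  simp [Function.update_of_ne hij.ne]

theorem Polynomial.exists_X_pow_sub_X_pow_eq_mul (c d : ℕ) :
    ∃ Q : R[X], X ^ c - X ^ d = (X - 1) * Q ∧ Q.eval 1 = c - d := by
  obtain ⟨Q, hQ⟩ : X - C 1 ∣ (X ^ c - X ^ d : R[X]) := dvd_iff_isRoot.mpr (by simp)
  rw [map_one] at hQ
  refine ⟨Q, hQ, ?_⟩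
  -- the derivative of `(X - 1) * Q` takes the value `Q 1` at `1`
  have h := congr(Polynomial.eval 1 (derivative $hQ))
  simpa [derivative_mul, derivative_X_pow] using h.symm

theorem Polynomial.exists_prod_X_pow_sub_X_pow_eq_mul {ι : Type*} (s : Finset ι) (c d : ι → ℕ) :
    ∃ Q : R[X], ∏ x ∈ s, (X ^ c x - X ^ d x) = (X - 1) ^ s.card * Q ∧
      Q.eval 1 = ∏ x ∈ s, ((c x : R) - d x) := by
  choose Q hQ using fun x => exists_X_pow_sub_X_pow_eq_mul (R := R) (c x) (d x)
  refine ⟨∏ x ∈ s, Q x, ?_, ?_⟩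
  · rw [Finset.prod_congr rfl fun x _ => (hQ x).1, Finset.prod_mul_distrib, Finset.prod_const]
  · rw [eval_prod]
    exact Finset.prod_congr rfl fun x _ => (hQ x).2

theorem prod_orderedPairs_sub_eq_mul_eval_one [IsDomain R] {n : ℕ} (b : Fin n → ℕ)
    {S : MvPolynomial (Fin n) R}
    (hS : (of fun i j => (X i : MvPolynomial (Fin n) R) ^ b j).det = (vandermonde X).det * S) :
    ∏ x ∈ orderedPairs n, ((b x.2 : R) - b x.1) =
      (∏ x ∈ orderedPairs n, (((x.2 : ℕ) : R) - (x.1 : ℕ))) * MvPolynomial.eval 1 S := by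
  let θ : MvPolynomial (Fin n) R →ₐ[R] R[X] := aeval fun i => Polynomial.X ^ (i : ℕ)
  have hD : θ (of fun i j => X i ^ b j).det =
      ∏ x ∈ orderedPairs n, (Polynomial.X ^ b x.2 - Polynomial.X ^ b x.1) := by
    have hmat : θ.mapMatrix (of fun i j => X i ^ b j) =
        (vandermonde fun j => Polynomial.X ^ b j)ᵀ := by
      ext i j
      simp [θ, vandermonde_apply, ← pow_mul, mul_comm]
    rw [AlgHom.map_det, hmat, det_transpose, det_vandermonde_eq_prod_orderedPairs]
  have hV : θ (vandermonde X).det =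
      ∏ x ∈ orderedPairs n, (Polynomial.X ^ (x.2 : ℕ) - Polynomial.X ^ (x.1 : ℕ)) := by
    simp [θ, det_vandermonde_eq_prod_orderedPairs]
  obtain ⟨Qb, hQb, hQb1⟩ := exists_prod_X_pow_sub_X_pow_eq_mul (R := R) (orderedPairs n)
    (fun x => b x.2) (fun x => b x.1)
  obtain ⟨Q, hQ, hQ1⟩ := exists_prod_X_pow_sub_X_pow_eq_mul (R := R) (orderedPairs n)
    (fun x => x.2) (fun x => x.1)
  have h := congr(θ $hS)
  rw [map_mul, hD, hV, hQb, hQ, mul_assoc] at h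
  rw [← hQb1, ← hQ1, ← eval_one_aeval_X_pow, ← Polynomial.eval_mul,
    mul_left_cancel₀ (pow_ne_zero _ (X_sub_C_ne_zero 1)) h]

end Vandermonde

section RootsOfUnity

open MvPolynomial Matrix

variable {K : Type*} [Field K] [CharZero K] {p : ℕ} {ζ : K}

theorem IsPrimitiveRoot.prime_dvd_eval_one_of_aeval_pow_eq_zero {σ : Type*} (hp : p.Prime)
    (hζ : IsPrimitiveRoot ζ p) (e : σ → ℕ) {S : MvPolynomial σ ℤ}
    (hS : MvPolynomial.aeval (fun i => ζ ^ e i) S = 0) : (p : ℤ) ∣ MvPolynomial.eval 1 S := by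
  have := Fact.mk hp
  have hT : aeval ζ (MvPolynomial.aeval (fun i => (X : ℤ[X]) ^ e i) S) = 0 := by
    simpa [MvPolynomial.comp_aeval_apply] using hS
  obtain ⟨U, hU⟩ : cyclotomic p ℤ ∣ MvPolynomial.aeval (fun i => (X : ℤ[X]) ^ e i) S := by
    rw [cyclotomic_eq_minpoly hζ hp.pos]
    exact minpoly.isIntegrallyClosed_dvd (hζ.isIntegral hp.pos) hT
  rw [← eval_one_aeval_X_pow e, hU, Polynomial.eval_mul, eval_one_cyclotomic_prime]
  exact dvd_mul_right _ _

theorem IsPrimitiveRoot.det_of_pow_mul_ne_zero {n : ℕ} (hp : p.Prime) (hζ : IsPrimitiveRoot ζ p)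
    {a b : Fin n → ℕ} (ha : StrictMono a) (hb : StrictMono b) (hap : ∀ i, a i < p)
    (hbp : ∀ j, b j < p) : (of fun i j => ζ ^ (a i * b j)).det ≠ 0 := by
  obtain ⟨S, hS⟩ := det_vandermonde_X_dvd_det_X_pow (R := ℤ) b
  have hS1 : ¬ (p : ℤ) ∣ MvPolynomial.eval 1 S := by
    intro h
    have hprod : (p : ℤ) ∣ ∏ x ∈ orderedPairs n, ((b x.2 : ℤ) - b x.1) := by
      rw [prod_orderedPairs_sub_eq_mul_eval_one b hS]
      exact dvd_mul_of_dvd_right h _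
    obtain ⟨x, hx, hdvd⟩ := (Nat.prime_iff_prime_int.mp hp).exists_mem_finset_dvd hprod
    have hlt := hb (mem_orderedPairs.mp hx)
    have hle := Int.le_of_dvd (by omega) hdvd
    have := hbp x.2
    omega
  intro hdet
  refine hS1 (hζ.prime_dvd_eval_one_of_aeval_pow_eq_zero hp a ?_)
  have hD : MvPolynomial.aeval (fun i => ζ ^ a i)
      (of fun i j => (X i : MvPolynomial (Fin n) ℤ) ^ b j).det =
        (of fun i j => ζ ^ (a i * b j)).det := by
    rw [AlgHom.map_det]
    congr 1
    ext i j
    simp [pow_mul]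
  have hV : MvPolynomial.aeval (fun i => ζ ^ a i)
      (vandermonde (X : Fin n → MvPolynomial (Fin n) ℤ)).det =
        (vandermonde fun i => ζ ^ a i).det := by
    simp [det_vandermonde_eq_prod_orderedPairs]
  have hVne : (vandermonde fun i => ζ ^ a i).det ≠ 0 :=
    det_vandermonde_ne_zero_iff.mpr fun i j h => ha.injective (hζ.pow_inj (hap i) (hap j) h)
  have h := congr(MvPolynomial.aeval (fun i => ζ ^ a i) $hS)
  rw [map_mul, hD, hV, hdet, eq_comm, mul_eq_zero] at h
  exact h.resolve_left hVne

theorem IsPrimitiveRoot.card_lt_card_support_of_isRoot_pow (hp : p.Prime)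
    (hζ : IsPrimitiveRoot ζ p) {f : K[X]} (hf : f ≠ 0) (hdeg : f.natDegree < p)
    {s : Finset ℕ} (hs : ∀ k ∈ s, k < p) (hroot : ∀ k ∈ s, f.IsRoot (ζ ^ k)) :
    s.card < f.support.card := by
  classical
  by_contra! hle
  obtain ⟨s', hs's, hs'card⟩ := Finset.exists_subset_card_eq hle
  let a := s'.orderEmbOfFin hs'card
  let b := f.support.orderEmbOfFin rfl
  have ha : ∀ i, a i ∈ s := fun i => hs's (s'.orderEmbOfFin_mem hs'card i)
  have hbp : ∀ j, b j < p := fun j =>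
    (le_natDegree_of_mem_supp _ (f.support.orderEmbOfFin_mem rfl j)).trans_lt hdeg
  have heval : ∀ x : K, f.eval x = ∑ j, f.coeff (b j) * x ^ b j := fun x => by
    rw [eval_eq_sum, Polynomial.sum_def]
    conv_lhs => rw [← Finset.map_orderEmbOfFin_univ f.support rfl, Finset.sum_map]
    rfl
  refine hζ.det_of_pow_mul_ne_zero hp a.strictMono b.strictMono (fun i => hs _ (ha i)) hbp
    (exists_mulVec_eq_zero_iff.mp ⟨fun j => f.coeff (b j), fun h => ?_, funext fun i => ?_⟩)
  · have hpos : 0 < f.support.card := Finset.card_pos.mpr (support_nonempty.mpr hf)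
    exact mem_support_iff.mp (f.support.orderEmbOfFin_mem rfl ⟨0, hpos⟩) (congr_fun h _)
  · simpa [mulVec, dotProduct, heval, pow_mul, mul_comm] using hroot _ (ha i)

end RootsOfUnity

namespace Polynomial

theorem natDegree_lt_card_support_of_dvd_X_pow_sub_one {F : Type*} [Field F] [CharZero F]
    {p : ℕ} (hp : p.Prime) {f g : F[X]} (hf : f ≠ 0) (hdeg : f.natDegree < p)
    (hgq : g ∣ X ^ p - 1) (hgf : g ∣ f) : g.natDegree < f.support.card := by
  classical
  have := NeZero.of_pos hp.pos
  let L := CyclotomicField p F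
  let ζ := IsCyclotomicExtension.zeta p F L
  have hζ : IsPrimitiveRoot ζ p := IsCyclotomicExtension.zeta_spec p F L
  set gL := g.map (algebraMap F L)
  set s := (Finset.range p).filter fun k => gL.IsRoot (ζ ^ k)
  have hgL : gL ∣ X ^ p - C 1 := by simpa using Polynomial.map_dvd (algebraMap F L) hgq
  have hq0 : (X ^ p - C 1 : L[X]) ≠ 0 := X_pow_sub_C_ne_zero hp.pos 1
  have hgL0 : gL ≠ 0 := ne_zero_of_dvd_ne_zero hq0 hgL
  have hroots : gL.roots.toFinset ⊆ s.image (ζ ^ ·) := by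
    intro μ hμ
    rw [Multiset.mem_toFinset, mem_roots hgL0] at hμ
    have hμp : μ ^ p = 1 := by
      simpa [sub_eq_zero] using (mem_roots hq0).mp
        (Multiset.mem_of_le (roots.le_of_dvd hq0 hgL) ((mem_roots hgL0).mpr hμ))
    obtain ⟨k, hk, rfl⟩ := hζ.eq_pow_of_pow_eq_one hμp
    exact Finset.mem_image_of_mem _ (by simpa [s, hk] using hμ)
  have hdeg_s : g.natDegree ≤ s.card := by
    have hsep : gL.Separable :=
      (separable_X_pow_sub_C 1 (by exact_mod_cast hp.ne_zero) one_ne_zero).of_dvd hgL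
    rw [← natDegree_map (algebraMap F L),
      ((X_pow_sub_one_splits hζ).of_dvd hq0 hgL).natDegree_eq_card_roots,
      ← Multiset.toFinset_card_of_nodup (nodup_roots hsep)]
    exact (Finset.card_le_card hroots).trans Finset.card_image_le
  have hlt := hζ.card_lt_card_support_of_isRoot_pow hp (f := f.map (algebraMap F L))
    (Polynomial.map_ne_zero hf) (by rwa [natDegree_map]) (s := s)
    (fun k hk => Finset.mem_range.mp (Finset.mem_filter.mp hk).1)
    (fun k hk => (Finset.mem_filter.mp hk).2.dvd (Polynomial.map_dvd _ hgf))
  rw [support_map_of_injective _ (algebraMap F L).injective] at hlt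
  omega

theorem finrank_span_mk_eq_sub_natDegree_gcd {F : Type*} [Field F] [DecidableEq F] {q : F[X]}
    (hq : q ≠ 0) (f : F[X]) :
    Module.finrank F (Ideal.span {Ideal.Quotient.mk (Ideal.span {q}) f}) =
      q.natDegree - (EuclideanDomain.gcd q f).natDegree := by
  set I := Ideal.span {q}
  set J : Ideal (F[X] ⧸ I) := Ideal.span {Ideal.Quotient.mk I f}
  have : Module.Finite F (F[X] ⧸ I) := (AdjoinRoot.powerBasis hq).finite
  have hJ : (Ideal.span {f}).map (Ideal.Quotient.mkₐ F I) = J := by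
    rw [Ideal.map_span, Set.image_singleton, Ideal.Quotient.mkₐ_eq_mk]
  have hsup : I ⊔ Ideal.span {f} = Ideal.span {EuclideanDomain.gcd q f} := by
    rw [EuclideanDomain.span_gcd, Ideal.span_insert]
  have hquot : Module.finrank F ((F[X] ⧸ I) ⧸ J.restrictScalars F) =
      (EuclideanDomain.gcd q f).natDegree := by
    rw [(Submodule.Quotient.restrictScalarsEquiv F J).finrank_eq, ← hJ,
      ((DoubleQuot.quotQuotEquivQuotSupₐ F I _).trans
        (Ideal.quotientEquivAlgOfEq F hsup)).toLinearEquiv.finrank_eq,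
      finrank_quotient_span_eq_natDegree]
  have hsum := Submodule.finrank_quotient_add_finrank (J.restrictScalars F)
  rw [hquot, finrank_quotient_span_eq_natDegree] at hsum
  rw [← ((Submodule.restrictScalarsEquiv F _ _ J).restrictScalars F).finrank_eq]
  omega

end Polynomial

/-- Uncertainty principle over fields of characteristic zero: for every prime `p` and every
nonzero `f ∈ F[X]` of degree `< p`, `wt(f) + dim I_f ≥ p + 1`, where `I_f` is the ideal
generated by `f` in `F[X]/(X^p - 1)`. -/
theorem uncertainty_char_zero (F : Type*) [Field F] [CharZero F] (p : ℕ) (hp : p.Prime) :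
    ∀ f : Polynomial F, f ≠ 0 → f.natDegree < p →
      p + 1 ≤ f.support.card +
        Module.finrank F
          (Ideal.span {Ideal.Quotient.mk
            (Ideal.span {(X : Polynomial F) ^ p - 1}) f}) := by
  intro f hf hdeg
  classical
  have hq : (X ^ p - 1 : F[X]) ≠ 0 := by simpa using X_pow_sub_C_ne_zero hp.pos (1 : F)
  have hqdeg : (X ^ p - 1 : F[X]).natDegree = p := by
    simpa using natDegree_X_pow_sub_C (n := p) (r := (1 : F))
  have hgq := EuclideanDomain.gcd_dvd_left (X ^ p - 1) f
  have hwt := natDegree_lt_card_support_of_dvd_X_pow_sub_one hp hf hdeg hgq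
    (EuclideanDomain.gcd_dvd_right _ f)
  have hle := natDegree_le_of_dvd hgq hq
  rw [finrank_span_mk_eq_sub_natDegree_gcd hq, hqdeg]
  omega
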